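/- arXiv:1609.07814 — 2 statements merged into one kernel-verified Lean document; each statement's English description precedes it below -/
import Mathlib

section
/- Let n ≥ 1, let Γ̊, K : ℝⁿ → Fin n → Fin n → Fin n → ℝ be smooth (with μ the differentiation index in Γ̊^σ_{μν}), assume Γ̊ is symmetric in its two lower indices, and set Γ = Γ̊ + K. Suppose (a) the Ricci tensor of the full connection vanishes identically, Ric(Γ)_{λν} = 0 for all x, λ, ν, and (b) the contortion K satisfies, for all x, λ, ν, the condition Σ_σ ∇̊_σ K^σ_{νλ} − Σ_σ ∇̊_ν K^σ_{σλ} + Σ_{σ,α} ( K^σ_{σα} K^α_{νλ} − K^σ_{να} K^α_{σλ} ) = 0. Then the Ricci tensor of the torsion-free connection also vanishes identically: Ric(Γ̊)_{λν} = 0 for all x, λ, ν. -/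
open scoped BigOperators

/-- Partial derivative in the `μ`-th coordinate direction of a real-valued
function on `ℝⁿ`. -/
noncomputable def pdv {n : ℕ} (μ : Fin n) (f : (Fin n → ℝ) → ℝ) (x : Fin n → ℝ) : ℝ :=
  fderiv ℝ f x (Pi.single μ 1)

/-- Coordinate curvature tensor of a connection-coefficient field `Γ`
(written `Γ x σ μ ν = Γ^σ_{μν}(x)`, with `μ` the differentiation index):
`R(Γ)^σ_{λμν} = ∂_μ Γ^σ_{νλ} − ∂_ν Γ^σ_{μλ} + Σ_α (Γ^σ_{μα} Γ^α_{νλ} − Γ^σ_{να} Γ^α_{μλ})`. -/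
noncomputable def curv {n : ℕ} (Γ : (Fin n → ℝ) → Fin n → Fin n → Fin n → ℝ)
    (x : Fin n → ℝ) (σ l μ ν : Fin n) : ℝ :=
  pdv μ (fun y => Γ y σ ν l) x - pdv ν (fun y => Γ y σ μ l) x
    + ∑ α, (Γ x σ μ α * Γ x α ν l - Γ x σ ν α * Γ x α μ l)

/-- Ricci tensor by contraction: `Ric(Γ)_{λν} = Σ_σ R(Γ)^σ_{λσν}`. -/
noncomputable def ricci {n : ℕ} (Γ : (Fin n → ℝ) → Fin n → Fin n → Fin n → ℝ)
    (x : Fin n → ℝ) (l ν : Fin n) : ℝ :=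
  ∑ σ, curv Γ x σ l σ ν

/-- Covariant derivative `∇̊_μ K^σ_{νλ}` of a (1,2)-tensor field `K` with respect to
a connection `Γ₀`. -/
noncomputable def covd {n : ℕ} (Γ₀ K : (Fin n → ℝ) → Fin n → Fin n → Fin n → ℝ)
    (x : Fin n → ℝ) (μ σ ν l : Fin n) : ℝ :=
  pdv μ (fun y => K y σ ν l) x
    + ∑ α, (Γ₀ x σ μ α * K x α ν l - Γ₀ x α μ ν * K x σ α l - Γ₀ x α μ l * K x σ ν α)

lemma pdv_add {n : ℕ} (μ : Fin n) (f g : (Fin n → ℝ) → ℝ) (x : Fin n → ℝ)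
    (hf : DifferentiableAt ℝ f x) (hg : DifferentiableAt ℝ g x) :
    pdv μ (fun y => f y + g y) x = pdv μ f x + pdv μ g x := by
  simp [pdv, fderiv_fun_add hf hg]

/-- If the Ricci tensor of `Γ = Γ̊ + K` vanishes identically and
the contortion `K` satisfies the paper's condition (equation (54)), then the Ricci
tensor of the torsion-free connection `Γ̊` also vanishes identically. -/
theorem ricci_flat_recovers_GR (n : ℕ) (hn : 1 ≤ n)
    (Γ₀ K : (Fin n → ℝ) → Fin n → Fin n → Fin n → ℝ)
    (hΓ₀_smooth : ∀ σ μ ν, ContDiff ℝ (⊤ : ℕ∞) (fun x => Γ₀ x σ μ ν))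
    (hK_smooth : ∀ σ μ ν, ContDiff ℝ (⊤ : ℕ∞) (fun x => K x σ μ ν))
    (hΓ₀_symm : ∀ x σ μ ν, Γ₀ x σ μ ν = Γ₀ x σ ν μ)
    (Γ : (Fin n → ℝ) → Fin n → Fin n → Fin n → ℝ)
    (hΓ : ∀ x σ μ ν, Γ x σ μ ν = Γ₀ x σ μ ν + K x σ μ ν)
    (hRicΓ : ∀ (x : Fin n → ℝ) (l ν : Fin n), ricci Γ x l ν = 0)
    (hKcond : ∀ (x : Fin n → ℝ) (l ν : Fin n),
      (∑ σ, covd Γ₀ K x σ σ ν l) - (∑ σ, covd Γ₀ K x ν σ σ l)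
        + ∑ σ, ∑ α, (K x σ σ α * K x α ν l - K x σ ν α * K x α σ l) = 0) :
    ∀ (x : Fin n → ℝ) (l ν : Fin n), ricci Γ₀ x l ν = 0 := by
  intro x l ν
  have hΓ₀d : ∀ (σ μ ν : Fin n) (y : Fin n → ℝ),
      DifferentiableAt ℝ (fun z => Γ₀ z σ μ ν) y := fun σ μ ν y =>
    ((hΓ₀_smooth σ μ ν).differentiable (by simp)).differentiableAt
  have hKd : ∀ (σ μ ν : Fin n) (y : Fin n → ℝ),
      DifferentiableAt ℝ (fun z => K z σ μ ν) y := fun σ μ ν y =>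
    ((hK_smooth σ μ ν).differentiable (by simp)).differentiableAt
  have key : ∀ σ : Fin n, curv Γ x σ l σ ν
      = curv Γ₀ x σ l σ ν + covd Γ₀ K x σ σ ν l - covd Γ₀ K x ν σ σ l
        + ∑ α, (K x σ σ α * K x α ν l - K x σ ν α * K x α σ l) := by
    intro σ
    unfold curv covd
    simp only [hΓ]
    rw [pdv_add σ _ _ x (hΓ₀d σ ν l x) (hKd σ ν l x),
        pdv_add ν _ _ x (hΓ₀d σ σ l x) (hKd σ σ l x)]
    have hsum : ∑ α, ((Γ₀ x σ σ α + K x σ σ α) * (Γ₀ x α ν l + K x α ν l)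
          - (Γ₀ x σ ν α + K x σ ν α) * (Γ₀ x α σ l + K x α σ l))
        = ∑ α, ((Γ₀ x σ σ α * Γ₀ x α ν l - Γ₀ x σ ν α * Γ₀ x α σ l)
          + (Γ₀ x σ σ α * K x α ν l - Γ₀ x α σ ν * K x σ α l - Γ₀ x α σ l * K x σ ν α)
          - (Γ₀ x σ ν α * K x α σ l - Γ₀ x α ν σ * K x σ α l - Γ₀ x α ν l * K x σ σ α)
          + (K x σ σ α * K x α ν l - K x σ ν α * K x α σ l)) := by
      refine Finset.sum_congr rfl fun α _ => ?_
      rw [hΓ₀_symm x α σ ν]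
      ring
    rw [hsum]
    simp only [Finset.sum_add_distrib, Finset.sum_sub_distrib]
    ring
  have h1 : ricci Γ x l ν
      = ricci Γ₀ x l ν + ((∑ σ, covd Γ₀ K x σ σ ν l) - (∑ σ, covd Γ₀ K x ν σ σ l)
        + ∑ σ, ∑ α, (K x σ σ α * K x α ν l - K x σ ν α * K x α σ l)) := by
    unfold ricci
    simp only [key, Finset.sum_add_distrib, Finset.sum_sub_distrib]
    ring
  have := hRicΓ x l ν
  have := hKcond x l ν
  linarith
end

section
/- Let n ≥ 1, let h : ℝⁿ → Matrix (Fin n) (Fin n) ℝ be smooth with h(x) invertible for every x, let η : Matrix (Fin n) (Fin n) ℝ be a constant symmetric matrix, and define the metric g : ℝⁿ → Fin n → Fin n → ℝ by g_{μν}(x) = Σ_{a,b} η_{ab} · h^a_μ(x) · h^b_ν(x). Let Γ be the Weitzenböck connection of h, Γ^ρ_{μν}(x) = Σ_a ( (h(x))⁻¹ ρ a ) · ∂_μ ( h^a_ν )(x). Then Γ is metric-compatible with g: for all x, μ, ν, λ, one has ∂_μ g_{νλ}(x) = Σ_σ ( Γ^σ_{μν}(x) · g_{σλ}(x) + Γ^σ_{μλ}(x)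 · g_{νσ}(x) ), i.e. the covariant derivative of g with respect to the Weitzenböck connection vanishes. -/
open scoped BigOperators
open Matrix

lemma pdv_sum {n : ℕ} (μ : Fin n) {ι : Type*} (s : Finset ι)
    (f : ι → (Fin n → ℝ) → ℝ) (x : Fin n → ℝ)
    (hf : ∀ i ∈ s, DifferentiableAt ℝ (f i) x) :
    pdv μ (fun y => ∑ i ∈ s, f i y) x = ∑ i ∈ s, pdv μ (f i) x := by
  unfold pdv
  rw [fderiv_fun_sum hf]
  simp

lemma pdv_mul {n : ℕ} (μ : Fin n) {f g : (Fin n → ℝ) → ℝ} {x : Fin n → ℝ}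
    (hf : DifferentiableAt ℝ f x) (hg : DifferentiableAt ℝ g x) :
    pdv μ (fun y => f y * g y) x = pdv μ f x * g x + f x * pdv μ g x := by
  unfold pdv
  rw [fderiv_fun_mul hf hg]
  simp only [ContinuousLinearMap.add_apply, ContinuousLinearMap.smul_apply, smul_eq_mul]
  ring

lemma pdv_const_mul {n : ℕ} (μ : Fin n) {f : (Fin n → ℝ) → ℝ} {x : Fin n → ℝ}
    (c : ℝ) (hf : DifferentiableAt ℝ f x) :
    pdv μ (fun y => c * f y) x = c * pdv μ f x := by
  unfold pdv
  rw [fderiv_const_mul hf]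
  simp

/-- The Weitzenböck connection `Γ^ρ_{μν} = Σ_a (h⁻¹)^ρ_a ∂_μ h^a_ν`
of an everywhere-invertible smooth tetrad field `h` is metric-compatible with the
metric `g_{μν} = Σ_{a,b} η_{ab} h^a_μ h^b_ν` built from a constant symmetric
matrix `η`: the covariant derivative of `g` vanishes, i.e. in coordinates
`∂_μ g_{νλ} = Σ_σ (Γ^σ_{μν} g_{σλ} + Γ^σ_{μλ} g_{νσ})`. -/
theorem weitzenboeck_metric_compatible (n : ℕ) (hn : 1 ≤ n)
    (h : (Fin n → ℝ) → Matrix (Fin n) (Fin n) ℝ)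
    (h_smooth : ∀ a ν : Fin n, ContDiff ℝ (⊤ : ℕ∞) (fun x => h x a ν))
    (h_inv : ∀ x : Fin n → ℝ, IsUnit (h x).det)
    (η : Matrix (Fin n) (Fin n) ℝ)
    (hη_symm : ∀ a b : Fin n, η a b = η b a)
    (g : (Fin n → ℝ) → Fin n → Fin n → ℝ)
    (hg : ∀ (x : Fin n → ℝ) (μ ν : Fin n),
      g x μ ν = ∑ a, ∑ b, η a b * h x a μ * h x b ν)
    (Γ : (Fin n → ℝ) → Fin n → Fin n → Fin n → ℝ)
    (hΓ : ∀ (x : Fin n → ℝ) (ρ μ ν : Fin n),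
      Γ x ρ μ ν = ∑ a, (h x)⁻¹ ρ a * pdv μ (fun y => h y a ν) x) :
    ∀ (x : Fin n → ℝ) (μ ν l : Fin n),
      pdv μ (fun y => g y ν l) x
        = ∑ σ, (Γ x σ μ ν * g x σ l + Γ x σ μ l * g x ν σ) := by
  intro x μ ν l
  have hdiff : ∀ a b : Fin n, DifferentiableAt ℝ (fun y => h y a b) x := fun a b =>
    ((h_smooth a b).differentiable (by simp)).differentiableAt
  set H : Matrix (Fin n) (Fin n) ℝ := h x with hH
  set D : Matrix (Fin n) (Fin n) ℝ :=
    Matrix.of (fun a b => pdv μ (fun y => h y a b) x) with hD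
  have hDapp : ∀ a b, D a b = pdv μ (fun y => h y a b) x := fun a b => rfl
  -- the left hand side
  have hL : pdv μ (fun y => g y ν l) x
      = ∑ a, ∑ b, η a b * (D a ν * H b l + H a ν * D b l) := by
    have e : (fun y => g y ν l)
        = fun y => ∑ a, ∑ b, (η a b * h y a ν) * h y b l :=
      funext fun y => by rw [hg y ν l]
    rw [e, pdv_sum μ _ _ x (fun a _ =>
      DifferentiableAt.fun_sum (fun b _ => ((hdiff a ν).const_mul (η a b)).fun_mul (hdiff b l)))]
    refine Finset.sum_congr rfl fun a _ => ?_
    rw [pdv_sum μ _ _ x (fun b _ => ((hdiff a ν).const_mul (η a b)).fun_mul (hdiff b l))]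
    refine Finset.sum_congr rfl fun b _ => ?_
    rw [pdv_mul μ ((hdiff a ν).const_mul _) (hdiff b l),
      pdv_const_mul μ _ (hdiff a ν)]
    rw [hDapp, hDapp]
    ring
  -- Γ and g as matrices
  have hΓm : ∀ σ ρ : Fin n, Γ x σ μ ρ = (H⁻¹ * D) σ ρ := by
    intro σ ρ
    rw [hΓ, Matrix.mul_apply]
    rfl
  have hgm : ∀ σ ρ : Fin n, g x σ ρ = (Hᵀ * η * H) σ ρ := by
    intro σ ρ
    rw [hg]
    simp only [Matrix.mul_apply, Matrix.transpose_apply, Finset.sum_mul]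
    rw [Finset.sum_comm]
    refine Finset.sum_congr rfl fun b _ => Finset.sum_congr rfl fun a _ => by ring
  -- matrix identities
  have hinv1 : (H⁻¹)ᵀ * Hᵀ = 1 := by
    rw [← Matrix.transpose_mul, Matrix.mul_nonsing_inv _ (h_inv x), Matrix.transpose_one]
  have hinv2 : H * H⁻¹ = 1 := Matrix.mul_nonsing_inv _ (h_inv x)
  have m1 : (H⁻¹ * D)ᵀ * (Hᵀ * η * H) = Dᵀ * (η * H) := by
    rw [Matrix.transpose_mul]
    calc Dᵀ * (H⁻¹)ᵀ * (Hᵀ * η * H)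
        = Dᵀ * (((H⁻¹)ᵀ * Hᵀ) * (η * H)) := by
          simp only [Matrix.mul_assoc]
      _ = Dᵀ * (η * H) := by rw [hinv1, Matrix.one_mul]
  have m2 : (Hᵀ * η * H) * (H⁻¹ * D) = Hᵀ * (η * D) := by
    calc (Hᵀ * η * H) * (H⁻¹ * D)
        = Hᵀ * (η * ((H * H⁻¹) * D)) := by simp only [Matrix.mul_assoc]
      _ = Hᵀ * (η * D) := by rw [hinv2, Matrix.one_mul]
  -- the right hand side
  have hR : ∑ σ, (Γ x σ μ ν * g x σ l + Γ x σ μ l * g x ν σ)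
      = ((H⁻¹ * D)ᵀ * (Hᵀ * η * H)) ν l + ((Hᵀ * η * H) * (H⁻¹ * D)) ν l := by
    simp only [Matrix.mul_apply, Matrix.transpose_apply]
    rw [← Finset.sum_add_distrib]
    refine Finset.sum_congr rfl fun σ _ => ?_
    rw [hΓm, hΓm, hgm, hgm]
    simp only [Matrix.mul_apply, Matrix.transpose_apply]
    ring
  rw [hL, hR, m1, m2]
  simp only [Matrix.mul_apply, Matrix.transpose_apply, Matrix.of_apply,
    Finset.mul_sum, Finset.sum_mul]
  rw [← Finset.sum_add_distrib]
  refine Finset.sum_congr rfl fun a _ => ?_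
  rw [← Finset.sum_add_distrib]
  refine Finset.sum_congr rfl fun b _ => ?_
  ring
end
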